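/- For all s ≥ 1, ∑_{i=0}^{s} (-1)^i · (1/(i+1)) · binomial(2i, i) · binomial(i+1, s-i) = 0, where the sum is taken in the rational numbers. -/

import Mathlib

/-!
With `t i = (-1)^i C_i binom(i+1, s-i)` (so `C_i` is the `i`-th Catalan number), Gosper's algorithm
finds the antidifference `G i = -(2i-s+1)(2i-s) t i`: from the term ratio
`t (i+1) / t i = -2(2i+1)(s-i) / ((2i+3-s)(2i+2-s))` and the identity
`s(s+1) = 2(2i+1)(s-i) + (2i-s+1)(2i-s)` one gets `G (i+1) - G i = s(s+1) t i` for `i < s`.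
Since `G 0 = 0` and `G s = -s(s+1) t s`, the sum telescopes to `s(s+1) ∑ t i = 0`.
-/

open Finset

theorem Nat.choose_succ_mul_succ_mul (n k : ℕ) :
    n.choose (k + 1) * (k + 1) * (n + 1) = (n + 1).choose k * (n + 1 - k) * (n - k) := by
  calc n.choose (k + 1) * (k + 1) * (n + 1)
      = (k + 1) * ((n + 1).choose (k + 2) * (k + 2)) := by rw [← add_one_mul_choose_eq]; ring
    _ = (n + 1).choose (k + 1) * (k + 1) * (n - k) := by
        rw [choose_succ_right_eq, Nat.add_sub_add_right]; ring
    _ = (n + 1).choose k * (n + 1 - k) * (n - k) := by rw [choose_succ_right_eq]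

theorem Nat.cast_choose_succ_mul_succ_mul {R : Type*} [CommRing R] (n k : ℕ) :
    (n.choose (k + 1) : R) * (k + 1) * (n + 1) = (n + 1).choose k * (n + 1 - k) * (n - k) := by
  rcases le_or_gt k n with hkn | hnk
  · have h := congrArg (Nat.cast : ℕ → R) (Nat.choose_succ_mul_succ_mul n k)
    push_cast [Nat.cast_sub hkn, Nat.cast_sub (Nat.le_succ_of_le hkn)] at h
    exact h
  · rw [Nat.choose_eq_zero_of_lt (by omega : n < k + 1)]
    rcases (Nat.succ_le_of_lt hnk).eq_or_lt with rfl | hk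
    · push_cast; ring
    · rw [Nat.choose_eq_zero_of_lt hk]; push_cast; ring

theorem add_two_mul_catalan_succ (n : ℕ) :
    (n + 2) * catalan (n + 1) = 2 * (2 * n + 1) * catalan n := by
  have h := Nat.succ_mul_centralBinom_succ n
  rw [← succ_mul_catalan_eq_centralBinom, ← succ_mul_catalan_eq_centralBinom] at h
  apply Nat.eq_of_mul_eq_mul_left n.succ_pos
  linarith

namespace CatalanAlternatingSum

def term (s i : ℕ) : ℚ := (-1) ^ i * catalan i * (i + 1).choose (s - i)

def antidiff (s i : ℕ) : ℚ := -((2 * i - s + 1) * (2 * i - s)) * term s i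

/-- The term ratio with denominators cleared: they vanish exactly where `term s i` does. -/
theorem term_succ_mul {s i : ℕ} (h : i < s) :
    term s (i + 1) * ((2 * i + 3 - s) * (2 * i + 2 - s)) =
      -(2 * (2 * i + 1) * (s - i)) * term s i := by
  obtain ⟨k, rfl⟩ : ∃ k, s = i + 1 + k := ⟨s - (i + 1), by omega⟩
  have hcat : ((i : ℚ) + 2) * catalan (i + 1) = 2 * (2 * i + 1) * catalan i := by
    exact_mod_cast add_two_mul_catalan_succ i
  have hchoose := Nat.cast_choose_succ_mul_succ_mul (R := ℚ) (i + 1) k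
  simp only [term, show i + 1 + k - (i + 1) = k by omega, show i + 1 + k - i = k + 1 by omega]
  apply mul_left_cancel₀ (show (i : ℚ) + 2 ≠ 0 by positivity)
  push_cast at hchoose ⊢
  linear_combination (-1) ^ i * (2 * (2 * i + 1) * catalan i) * hchoose -
    (-1) ^ i * ((i + 2).choose k) * (i + 2 - k) * (i + 1 - k) * hcat

theorem antidiff_succ_sub {s i : ℕ} (h : i < s) :
    antidiff s (i + 1) - antidiff s i = s * (s + 1) * term s i := by
  have hratio := term_succ_mul h
  simp only [antidiff]
  push_cast
  linear_combination -hratio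

theorem antidiff_zero (s : ℕ) : antidiff s 0 = 0 := by
  rcases Nat.lt_or_ge s 2 with hs | hs
  · interval_cases s <;> simp [antidiff, term]
  · simp [antidiff, term, Nat.choose_eq_zero_of_lt (show 1 < s by omega)]

theorem antidiff_self (s : ℕ) : antidiff s s = -(s * (s + 1)) * term s s := by
  simp only [antidiff]
  ring

theorem mul_sum_term (s : ℕ) : s * (s + 1) * ∑ i ∈ range (s + 1), term s i = 0 := by
  rw [mul_sum, sum_range_succ, ← sum_congr rfl fun i hi => antidiff_succ_sub (mem_range.mp hi),
    sum_range_sub, antidiff_self, antidiff_zero]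
  ring

end CatalanAlternatingSum

open CatalanAlternatingSum in
theorem catalan_alternating_sum_rat (s : ℕ) (hs : 1 ≤ s) :
    ∑ i ∈ Finset.range (s + 1),
      (-1 : ℚ) ^ i * (1 / ((i : ℚ) + 1)) * (2 * i).choose i * (i + 1).choose (s - i) = 0 := by
  have hterm (i : ℕ) :
      (-1 : ℚ) ^ i * (1 / ((i : ℚ) + 1)) * (2 * i).choose i * (i + 1).choose (s - i) =
        term s i := by
    rw [term, ← Nat.centralBinom_eq_two_mul_choose, ← succ_mul_catalan_eq_centralBinom]
    push_cast
    field_simp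
  have hs' : (s : ℚ) * (s + 1) ≠ 0 := by positivity
  simp_rw [hterm]
  exact (mul_eq_zero.mp (mul_sum_term s)).resolve_left hs'
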